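/- Suppose the Verblunsky coefficients satisfy |α_n| ≤ C q^n for all n ≥ 0, where C > 0 and q ∈ (0,1), and set C_1 = ∏_{j=0}^∞ (1 + C q^j). Then for every n ≥ 0 and every z with 1 ≤ |z| < 1/q, one has |Φ_n*(z)| ≤ 1 + C_1 C |z| (1 − q|z|)^{-1}. -/

import Mathlib

open Polynomial Filter Topology

/-- The monic orthogonal polynomials on the unit circle, defined by the Szegő
recursion `Φ₀ = 1`, `Φ_{n+1}(z) = z Φ_n(z) - conj(α_n) Φ_n^*(z)`, where the reversed
polynomial is `P^*(z) = Σ_{j=0}^n conj(c_{n-j}) z^j`. -/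
noncomputable def PhiP (α : ℕ → ℂ) : ℕ → Polynomial ℂ
  | 0 => 1
  | n + 1 => X * PhiP α n -
      Polynomial.C ((starRingEnd ℂ) (α n)) *
        Polynomial.reflect n (Polynomial.map (starRingEnd ℂ) (PhiP α n))

/-- The reversed polynomial `Φ_n^*(z) = z^n conj(Φ_n(1/conj z))`. -/
noncomputable def PhiStarP (α : ℕ → ℂ) (n : ℕ) : Polynomial ℂ :=
  Polynomial.reflect n (Polynomial.map (starRingEnd ℂ) (PhiP α n))
/-!
The Szegő recursion gives `Φ*_{n+1} = Φ*_n - α_n z Φ_n`, so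
`Φ*_n(z) = 1 - ∑_{k<n} α_k z Φ_k(z)`. For `|z| ≥ 1` an induction on the pair `(Φ_n, Φ*_n)` bounds
both `|Φ_n(z)|` and `|Φ*_n(z)|` by `∏_{j<n} (1 + |α_j|) |z|^n ≤ C₁ |z|^n`, so the `k`-th term of
the sum is at most `C₁ C |z| (q|z|)^k`: a geometric series of ratio `q|z| < 1`.
-/

theorem prod_le_of_hasProd_of_one_le {ι R : Type*} [CommSemiring R] [PartialOrder R]
    [IsOrderedRing R] [TopologicalSpace R] [OrderClosedTopology R] {f : ι → R} {a : R}
    (hf : ∀ i, 1 ≤ f i) (ha : HasProd f a) (s : Finset ι) : ∏ i ∈ s, f i ≤ a :=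
  ge_of_tendsto ha (eventually_atTop.2 ⟨s, fun _ hst ↦ Finset.prod_mono_set_of_one_le hf hst⟩)

section Reflect

variable {R : Type*} [Semiring R] {p : R[X]} {n : ℕ}

theorem reflect_succ_X_mul (hp : p.natDegree ≤ n) : reflect (n + 1) (X * p) = reflect n p := by
  rw [add_comm, reflect_mul _ _ natDegree_X_le hp, reflect_one_X, one_mul]

theorem reflect_succ_of_natDegree_le (hp : p.natDegree ≤ n) :
    reflect (n + 1) p = X * reflect n p := by
  conv_lhs => rw [add_comm, ← one_mul p]
  rw [reflect_mul (F := 1) _ _ (by simp) hp, reflect_one, pow_one]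

end Reflect

theorem PhiP_succ (α : ℕ → ℂ) (n : ℕ) :
    PhiP α (n + 1) = X * PhiP α n - C (starRingEnd ℂ (α n)) * PhiStarP α n :=
  rfl

theorem natDegree_PhiP_le (α : ℕ → ℂ) (n : ℕ) : (PhiP α n).natDegree ≤ n := by
  induction n with
  | zero => simp [PhiP]
  | succ n ih =>
    rw [PhiP_succ]
    refine (natDegree_sub_le _ _).trans (max_le ?_ ?_)
    · exact natDegree_mul_le.trans (by rw [natDegree_X]; omega)
    · refine natDegree_C_mul_le _ _ |>.trans (natDegree_reflect_le.trans ?_)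
      exact max_le n.le_succ ((natDegree_map_le).trans (ih.trans n.le_succ))

theorem reflect_map_conj_PhiStarP (α : ℕ → ℂ) (n : ℕ) :
    reflect n ((PhiStarP α n).map (starRingEnd ℂ)) = PhiP α n := by
  rw [PhiStarP, reflect_map, reflect_reflect, Polynomial.map_map]
  simp

theorem PhiStarP_succ (α : ℕ → ℂ) (n : ℕ) :
    PhiStarP α (n + 1) = PhiStarP α n - C (α n) * (X * PhiP α n) := by
  have hdeg : ((PhiP α n).map (starRingEnd ℂ)).natDegree ≤ n :=
    natDegree_map_le.trans (natDegree_PhiP_le α n)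
  have hdeg' : ((PhiStarP α n).map (starRingEnd ℂ)).natDegree ≤ n :=
    natDegree_map_le.trans (natDegree_reflect_le.trans (max_le le_rfl hdeg))
  rw [PhiStarP, PhiP_succ, Polynomial.map_sub, Polynomial.map_mul, Polynomial.map_mul,
    reflect_sub, map_X, map_C, reflect_C_mul, reflect_succ_X_mul hdeg,
    reflect_succ_of_natDegree_le hdeg', reflect_map_conj_PhiStarP, Complex.conj_conj, PhiStarP]

theorem eval_PhiStarP (α : ℕ → ℂ) (n : ℕ) (z : ℂ) :
    (PhiStarP α n).eval z = 1 - ∑ k ∈ Finset.range n, α k * z * (PhiP α k).eval z := by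
  induction n with
  | zero => simp [PhiStarP, PhiP]
  | succ n ih =>
    rw [PhiStarP_succ, Finset.sum_range_succ, eval_sub, ih]
    simp only [eval_mul, eval_C, eval_X]
    ring

theorem norm_eval_PhiP_le_and_norm_eval_PhiStarP_le (α : ℕ → ℂ) {z : ℂ} (hz : 1 ≤ ‖z‖)
    (n : ℕ) :
    ‖(PhiP α n).eval z‖ ≤ (∏ j ∈ Finset.range n, (1 + ‖α j‖)) * ‖z‖ ^ n ∧
      ‖(PhiStarP α n).eval z‖ ≤ (∏ j ∈ Finset.range n, (1 + ‖α j‖)) * ‖z‖ ^ n := by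
  induction n with
  | zero => simp [PhiP, PhiStarP]
  | succ n ih =>
    obtain ⟨hΦ, hΦstar⟩ := ih
    set M := (∏ j ∈ Finset.range n, (1 + ‖α j‖)) * ‖z‖ ^ n
    have hM : M ≤ ‖z‖ * M := le_mul_of_one_le_left (by positivity) hz
    have hsucc : (∏ j ∈ Finset.range (n + 1), (1 + ‖α j‖)) * ‖z‖ ^ (n + 1) =
        ‖z‖ * M + ‖α n‖ * (‖z‖ * M) := by
      rw [Finset.prod_range_succ, pow_succ]; ring
    rw [hsucc, PhiP_succ, PhiStarP_succ]
    simp only [eval_sub, eval_mul, eval_X, eval_C]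
    constructor
    · calc ‖z * (PhiP α n).eval z - starRingEnd ℂ (α n) * (PhiStarP α n).eval z‖
          ≤ ‖z‖ * ‖(PhiP α n).eval z‖ + ‖α n‖ * ‖(PhiStarP α n).eval z‖ := by
            rw [← Complex.norm_conj (α n), ← norm_mul, ← norm_mul]; exact norm_sub_le _ _
        _ ≤ ‖z‖ * M + ‖α n‖ * (‖z‖ * M) := by gcongr; exact hΦstar.trans hM
    · calc ‖(PhiStarP α n).eval z - α n * (z * (PhiP α n).eval z)‖
          ≤ ‖(PhiStarP α n).eval z‖ + ‖α n‖ * (‖z‖ * ‖(PhiP α n).eval z‖) := by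
            rw [← norm_mul, ← norm_mul]; exact norm_sub_le _ _
        _ ≤ ‖z‖ * M + ‖α n‖ * (‖z‖ * M) := by gcongr; exact hΦstar.trans hM

theorem prod_one_add_norm_le_of_hasProd {α : ℕ → ℂ} {b : ℕ → ℝ} {B : ℝ}
    (hαb : ∀ n, ‖α n‖ ≤ b n) (hB : HasProd (fun j ↦ 1 + b j) B) (n : ℕ) :
    ∏ j ∈ Finset.range n, (1 + ‖α j‖) ≤ B := by
  have hb : ∀ j, 1 ≤ 1 + b j := fun j ↦ by linarith [(norm_nonneg (α j)).trans (hαb j)]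
  calc ∏ j ∈ Finset.range n, (1 + ‖α j‖)
      ≤ ∏ j ∈ Finset.range n, (1 + b j) :=
        Finset.prod_le_prod (fun j _ ↦ by positivity) (fun j _ ↦ by linarith [hαb j])
    _ ≤ B := prod_le_of_hasProd_of_one_le hb hB _

theorem stmt_1_general (α : ℕ → ℂ)
    (C q : ℝ) (hC : 0 < C) (hq0 : 0 < q)
    (hdecay : ∀ n : ℕ, ‖α n‖ ≤ C * q ^ n)
    (C₁ : ℝ) (hC₁ : HasProd (fun j : ℕ => 1 + C * q ^ j) C₁) :
    ∀ n : ℕ, ∀ z : ℂ, 1 ≤ ‖z‖ → ‖z‖ < 1 / q →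
      ‖(PhiStarP α n).eval z‖ ≤
        1 + C₁ * C * ‖z‖ * (1 - q * ‖z‖)⁻¹ := by
  intro n z hz1 hz2
  have hqz : q * ‖z‖ < 1 := by rwa [lt_div_iff₀ hq0, mul_comm] at hz2
  have hprod := prod_one_add_norm_le_of_hasProd hdecay hC₁
  have hC₁_one : 1 ≤ C₁ := by simpa using hprod 0
  have hterm (k : ℕ) : ‖α k * z * (PhiP α k).eval z‖ ≤ C₁ * C * ‖z‖ * (q * ‖z‖) ^ k := by
    rw [norm_mul, norm_mul, mul_pow]
    calc ‖α k‖ * ‖z‖ * ‖(PhiP α k).eval z‖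
        ≤ C * q ^ k * ‖z‖ * (C₁ * ‖z‖ ^ k) := by
          gcongr
          · exact hdecay k
          · exact (norm_eval_PhiP_le_and_norm_eval_PhiStarP_le α hz1 k).1.trans
              (by gcongr; exact hprod k)
      _ = C₁ * C * ‖z‖ * (q ^ k * ‖z‖ ^ k) := by ring
  have hgeom : ∑ k ∈ Finset.range n, (q * ‖z‖) ^ k ≤ (1 - q * ‖z‖)⁻¹ :=
    sum_le_hasSum _ (fun k _ ↦ by positivity) (hasSum_geometric_of_lt_one (by positivity) hqz)
  rw [eval_PhiStarP]
  calc ‖1 - ∑ k ∈ Finset.range n, α k * z * (PhiP α k).eval z‖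
      ≤ 1 + ∑ k ∈ Finset.range n, C₁ * C * ‖z‖ * (q * ‖z‖) ^ k := by
        refine (norm_sub_le _ _).trans ?_
        rw [norm_one]
        gcongr
        exact (norm_sum_le _ _).trans (Finset.sum_le_sum fun k _ ↦ hterm k)
    _ ≤ 1 + C₁ * C * ‖z‖ * (1 - q * ‖z‖)⁻¹ := by
        rw [← Finset.mul_sum]
        gcongr

theorem stmt_1 (α : ℕ → ℂ) (hα : ∀ n, ‖α n‖ < 1)
    (C q : ℝ) (hC : 0 < C) (hq0 : 0 < q) (hq1 : q < 1)
    (hdecay : ∀ n : ℕ, ‖α n‖ ≤ C * q ^ n)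
    (C₁ : ℝ) (hC₁ : HasProd (fun j : ℕ => 1 + C * q ^ j) C₁) :
    ∀ n : ℕ, ∀ z : ℂ, 1 ≤ ‖z‖ → ‖z‖ < 1 / q →
      ‖(PhiStarP α n).eval z‖ ≤
        1 + C₁ * C * ‖z‖ * (1 - q * ‖z‖)⁻¹ :=
  stmt_1_general α C q hC hq0 hdecay C₁ hC₁
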